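/- T₁ = λn((n)δ)G, with G = λx λy (x) λz (y)(s̲)z and δ = λf (f)0̲, is a storage operator for the integers. -/
import Mathlib

/- Untyped λ-calculus with de Bruijn indices, head reduction, Church numerals. -/

inductive Lam : Type
  | var : ℕ → Lam
  | app : Lam → Lam → Lam
  | lam : Lam → Lam
deriving DecidableEq, Repr

namespace Lam

/-- Shift free variables `≥ c` up by 1. -/
def lift (c : ℕ) : Lam → Lam
  | var n => if n < c then var n else var (n + 1)
  | app s t => app (s.lift c) (t.lift c)
  | lam t => lam (t.lift (c + 1))

/-- Push a substitution under a binder. -/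
def up (σ : ℕ → Lam) : ℕ → Lam
  | 0 => var 0
  | n + 1 => (σ n).lift 0

/-- Capture-avoiding simultaneous substitution. -/
def subst (σ : ℕ → Lam) : Lam → Lam
  | var n => σ n
  | app s t => app (s.subst σ) (t.subst σ)
  | lam t => lam (t.subst (up σ))

/-- `t.subst0 u` is `t[u/0]`, the β-contractum substitution. -/
def subst0 (t u : Lam) : Lam :=
  t.subst (fun n => match n with | 0 => u | n + 1 => var n)

/-- `m` occurs free in the term. -/
def FreeIn (m : ℕ) : Lam → Prop
  | var n => n = m
  | app s t => s.FreeIn m ∨ t.FreeIn m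
  | lam t => t.FreeIn (m + 1)

/-- A closed λ-term. -/
def Closed (t : Lam) : Prop := ∀ m, ¬ t.FreeIn m

end Lam

/-- One-step β-reduction (anywhere in the term). -/
inductive Beta : Lam → Lam → Prop
  | beta (t u) : Beta (.app (.lam t) u) (t.subst0 u)
  | appL {s s'} (t) : Beta s s' → Beta (.app s t) (.app s' t)
  | appR {t t'} (s) : Beta t t' → Beta (.app s t) (.app s t')
  | lam {t t'} : Beta t t' → Beta (.lam t) (.lam t')

/-- β-equivalence `≃β`. -/
def BetaEq : Lam → Lam → Prop := Relation.EqvGen Beta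

/-- A term in (β-)normal form. -/
def NormalForm (t : Lam) : Prop := ∀ u, ¬ Beta t u

/-- One step of head reduction: reduce the head redex. -/
inductive HStep : Lam → Lam → Prop
  | beta (t u) : HStep (.app (.lam t) u) (t.subst0 u)
  | lam {t t'} : HStep t t' → HStep (.lam t) (.lam t')
  | app {t t'} (u) : HStep t t' → (∀ s, t ≠ .lam s) → HStep (.app t u) (.app t' u)

/-- `HRedN k u v` : `u ≻ v` by a head reduction of length `h(u,v) = k`. -/
inductive HRedN : ℕ → Lam → Lam → Prop
  | refl (t) : HRedN 0 t t
  | step {k t u v} : HStep t u → HRedN k u v → HRedN (k + 1) t v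

/-- `u ≻ v` : `v` is obtained from `u` by head reduction. -/
def HRed (t u : Lam) : Prop := ∃ k, HRedN k t u

/-- Head normal form: no head redex. -/
def HeadNormal (t : Lam) : Prop := ∀ u, ¬ HStep t u

/-- Solvable: the head reduction terminates. -/
def Solvable (t : Lam) : Prop := ∃ v, HRed t v ∧ HeadNormal v

/-- `(t)u₁…uₙ` : iterated application. -/
def appList : Lam → List Lam → Lam
  | t, [] => t
  | t, u :: us => appList (t.app u) us

/-- `(f)ⁿ x` with `x = var 1`, `f = var 0`. -/
def churchBody : ℕ → Lam
  | 0 => .var 1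
  | n + 1 => .app (.var 0) (churchBody n)

/-- Church numeral `n̲ = λx λf (f)ⁿ x`. -/
def church (n : ℕ) : Lam := .lam (.lam (churchBody n))

/-- `0̲ = λx λf x`. -/
def czero : Lam := .lam (.lam (.var 1))

/-- `s̲ = λn λx λf (f)((n)x)f`. -/
def csucc : Lam := .lam (.lam (.lam (.app (.var 0) (.app (.app (.var 2) (.var 1)) (.var 0)))))

/-- `(s̲)ⁿ 0̲`. -/
def succIter : ℕ → Lam
  | 0 => czero
  | n + 1 => .app csucc (succIter n)

/-- `G = λx λy (x) λz (y)(s̲)z`. -/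
def Gop : Lam := .lam (.lam (.app (.var 1) (.lam (.app (.var 1) (.app csucc (.var 0))))))

/-- `δ = λf (f)0̲`. -/
def deltaOp : Lam := .lam (.app (.var 0) czero)

/-- `T₁ = λn ((n)δ)G`. -/
def T1 : Lam := .lam (.app (.app (.var 0) deltaOp) Gop)

/-- `F = λx λy (x)(s̲)y`. -/
def Fop : Lam := .lam (.lam (.app (.var 1) (.app csucc (.var 0))))

/-- `T₂ = λn λf (((n)f)F)0̲`. -/
def T2 : Lam := .lam (.lam (.app (.app (.app (.var 1) (.var 0)) Fop) czero))

/-- `θ₀ = λx λf λz (x)(λd z)(λx x)`. -/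
def theta0 : Lam := .lam (.lam (.lam (.app (.app (.var 2) (.lam (.var 1))) (.lam (.var 0)))))

/-- `T` is a storage operator for the integers (the fixed variable `f` is `var 0`). -/
def IsStorage (T : Lam) : Prop :=
  ∀ n : ℕ, ∃ τ : Lam, BetaEq τ (church n) ∧
    ∀ θ : Lam, BetaEq θ (church n) →
      ∃ σ : ℕ → Lam, HRed (.app (.app T θ) (.var 0)) (.app (.var 0) (τ.subst σ))

/-! ## Substitution calculus -/

namespace Lam

theorem lift_lift (t : Lam) : ∀ c d, d ≤ c → (t.lift c).lift d = (t.lift d).lift (c+1) := by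
  induction t with
  | var n =>
    intro c d h
    simp only [lift]
    split_ifs with h1 h2 h2 <;> simp only [lift] <;> split_ifs <;> (try rfl) <;> omega
  | app s t ihs iht =>
    intro c d h
    simp only [lift, ihs _ _ h, iht _ _ h]
  | lam t ih =>
    intro c d h
    simp only [lift, ih (c+1) (d+1) (by omega)]

theorem subst_lift (t : Lam) : ∀ (σ : ℕ → Lam) c,
    (t.subst σ).lift c = t.subst (fun n => (σ n).lift c) := by
  induction t with
  | var n => intro σ c; rfl
  | app s t ihs iht => intro σ c; simp only [subst, lift, ihs, iht]
  | lam t ih =>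
    intro σ c
    simp only [subst, lift, ih]
    congr 1
    apply congrArg (fun σ => t.subst σ)
    funext n
    cases n with
    | zero => simp [up, lift]
    | succ n => exact (lift_lift (σ n) c 0 (by omega)).symm

theorem lift_subst (t : Lam) : ∀ (σ : ℕ → Lam) c,
    (t.lift c).subst σ = t.subst (fun n => if n < c then σ n else σ (n+1)) := by
  induction t with
  | var n =>
    intro σ c; simp only [lift]
    split_ifs with h <;> simp [subst, h]
  | app s t ihs iht => intro σ c; simp only [subst, lift, ihs, iht]
  | lam t ih =>
    intro σ c
    simp only [subst, lift, ih]
    congr 1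
    apply congrArg (fun σ => t.subst σ)
    funext n
    cases n with
    | zero => simp [up]
    | succ n =>
      simp only [up, Nat.add_lt_add_iff_right]
      split_ifs <;> rfl

theorem subst_subst (t : Lam) : ∀ (σ τ : ℕ → Lam),
    (t.subst σ).subst τ = t.subst (fun n => (σ n).subst τ) := by
  induction t with
  | var n => intro σ τ; rfl
  | app s t ihs iht => intro σ τ; simp only [subst, ihs, iht]
  | lam t ih =>
    intro σ τ
    simp only [subst, ih]
    congr 1
    apply congrArg (fun σ => t.subst σ)
    funext n
    cases n with
    | zero => rfl
    | succ n =>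
      simp only [up, lift_subst, subst_lift]
      rfl

theorem subst_id (t : Lam) : t.subst .var = t := by
  induction t with
  | var n => rfl
  | app s t ihs iht => simp only [subst, ihs, iht]
  | lam t ih =>
    simp only [subst]
    congr 1
    have : up .var = .var := by
      funext n; cases n with
      | zero => rfl
      | succ n => simp [up, lift]
    rw [this, ih]

theorem subst_ext {σ σ' : ℕ → Lam} (h : ∀ n, σ n = σ' n) (t : Lam) :
    t.subst σ = t.subst σ' := by
  have : σ = σ' := funext h
  rw [this]

/-- `(lift 0 t).subst0 u = t`. -/
theorem lift0_subst0 (t u : Lam) : (t.lift 0).subst0 u = t := by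
  unfold subst0
  rw [lift_subst]
  simpa using subst_id t

/-- substitution under binder then subst0 composition -/
theorem subst0_subst (a b : Lam) (σ : ℕ → Lam) :
    (a.subst (up σ)).subst0 (b.subst σ) = (a.subst0 b).subst σ := by
  unfold subst0
  rw [subst_subst, subst_subst]
  apply subst_ext
  intro n
  cases n with
  | zero => rfl
  | succ n =>
    show ((σ n).lift 0).subst _ = _
    exact (lift_subst (σ n) _ 0).trans
      ((subst_ext (fun m => by simp) (σ n)).trans (subst_id (σ n)))

/-- lift commutes with subst0 -/
theorem subst0_lift (a b : Lam) (c : ℕ) :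
    ((a.lift (c+1)).subst0 (b.lift c)) = (a.subst0 b).lift c := by
  unfold subst0
  rw [lift_subst, subst_lift]
  apply subst_ext
  intro n
  cases n with
  | zero => simp
  | succ n =>
    simp only [Nat.add_lt_add_iff_right, lift]

end Lam
/-! ## Bounded terms (all free variables < c) -/

namespace Lam

def bnd : ℕ → Lam → Bool
  | c, var n => n < c
  | c, app s t => bnd c s && bnd c t
  | c, lam t => bnd (c+1) t

theorem subst_bnd : ∀ (t : Lam) (c : ℕ) (σ : ℕ → Lam), bnd c t = true →
    (∀ j, j < c → σ j = var j) → t.subst σ = t := by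
  intro t
  induction t with
  | var n => intro c σ hb hσ; exact hσ n (by simpa [bnd] using hb)
  | app s t ihs iht =>
    intro c σ hb hσ
    simp only [bnd, Bool.and_eq_true] at hb
    simp only [subst, ihs c σ hb.1 hσ, iht c σ hb.2 hσ]
  | lam t ih =>
    intro c σ hb hσ
    simp only [bnd] at hb
    simp only [subst]
    rw [ih (c+1) (up σ) hb]
    intro j hj
    cases j with
    | zero => rfl
    | succ j => simp [up, hσ j (by omega), lift]

theorem lift_bnd : ∀ (t : Lam) (c c' : ℕ), bnd c t = true → c ≤ c' → t.lift c' = t := by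
  intro t
  induction t with
  | var n => intro c c' hb h; simp only [bnd, decide_eq_true_eq] at hb; simp [lift]; omega
  | app s t ihs iht =>
    intro c c' hb h
    simp only [bnd, Bool.and_eq_true] at hb
    simp only [lift, ihs c c' hb.1 h, iht c c' hb.2 h]
  | lam t ih =>
    intro c c' hb h
    simp only [bnd] at hb
    simp only [lift, ih (c+1) (c'+1) hb (by omega)]

theorem bnd_czero : bnd 0 czero = true := by decide
theorem bnd_csucc : bnd 0 csucc = true := by decide
theorem bnd_delta : bnd 0 deltaOp = true := by decide
theorem bnd_Gop : bnd 0 Gop = true := by decide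

theorem bnd_mono : ∀ (t : Lam) (c c' : ℕ), bnd c t = true → c ≤ c' → bnd c' t = true := by
  intro t
  induction t with
  | var n => intro c c' hb h; simp only [bnd, decide_eq_true_eq] at *; omega
  | app s t ihs iht =>
    intro c c' hb h
    simp only [bnd, Bool.and_eq_true] at *
    exact ⟨ihs c c' hb.1 h, iht c c' hb.2 h⟩
  | lam t ih =>
    intro c c' hb h
    simp only [bnd] at *
    exact ih (c+1) (c'+1) hb (by omega)

theorem bnd_succIter (n : ℕ) : bnd 0 (succIter n) = true := by
  induction n with
  | zero => exact bnd_czero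
  | succ n ih => simp [succIter, bnd, bnd_csucc, ih]

theorem subst_closed {t : Lam} (h : bnd 0 t = true) (σ : ℕ → Lam) : t.subst σ = t :=
  subst_bnd t 0 σ h (by omega)

theorem lift_closed {t : Lam} (h : bnd 0 t = true) (c : ℕ) : t.lift c = t :=
  lift_bnd t 0 c h (by omega)

end Lam

/-! ## Basic facts about head reduction -/

def NotLam (t : Lam) : Prop := ∀ s, t ≠ .lam s

theorem notlam_var (n : ℕ) : NotLam (.var n) := fun s h => by cases h
theorem notlam_app (a b : Lam) : NotLam (.app a b) := fun s h => by cases h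

namespace HRed

theorem refl (t : Lam) : HRed t t := ⟨0, .refl t⟩

theorem single {t u : Lam} (h : HStep t u) : HRed t u := ⟨1, .step h (.refl u)⟩

theorem headStep {t u v : Lam} (h : HStep t u) (h2 : HRed u v) : HRed t v := by
  obtain ⟨k, hk⟩ := h2
  exact ⟨k+1, .step h hk⟩

theorem trans {t u v : Lam} (h1 : HRed t u) (h2 : HRed u v) : HRed t v := by
  obtain ⟨k1, hk1⟩ := h1
  induction hk1 with
  | refl => exact h2
  | step h _ ih => exact headStep h (ih h2)

end HRed

theorem hstep_subst {t u : Lam} (σ : ℕ → Lam) (h : HStep t u) :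
    HStep (t.subst σ) (u.subst σ) := by
  induction h generalizing σ with
  | beta a b =>
    have : (a.subst0 b).subst σ = (a.subst (Lam.up σ)).subst0 (b.subst σ) :=
      (Lam.subst0_subst a b σ).symm
    rw [Lam.subst, this]
    exact .beta _ _
  | lam h ih => exact .lam (ih _)
  | @app tt tt' b h hn ih =>
    refine .app _ (ih σ) ?_
    intro s hs
    cases tt with
    | var n => cases h
    | lam x => exact hn x rfl
    | app x y => simp [Lam.subst] at hs

theorem hred_subst {t u : Lam} (σ : ℕ → Lam) (h : HRed t u) :
    HRed (t.subst σ) (u.subst σ) := by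
  obtain ⟨k, hk⟩ := h
  induction hk with
  | refl => exact HRed.refl _
  | step h _ ih => exact HRed.headStep (hstep_subst σ h) ih

theorem hred_lam {t u : Lam} (h : HRed t u) : HRed (.lam t) (.lam u) := by
  obtain ⟨k, hk⟩ := h
  induction hk with
  | refl => exact HRed.refl _
  | step h _ ih => exact HRed.headStep (.lam h) ih

theorem hredN_lam_inv {k : ℕ} {t : Lam} {u v : Lam} (h : HRedN k u v) :
    u = .lam t → ∃ c, v = .lam c ∧ HRed t c := by
  induction h generalizing t with
  | refl => exact fun h => ⟨t, h ▸ rfl, HRed.refl t⟩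
  | step hs _ ih =>
    rintro rfl
    cases hs with
    | lam hs' =>
      obtain ⟨c, rfl, hc⟩ := ih rfl
      exact ⟨c, rfl, HRed.headStep hs' hc⟩

theorem hred_lam_inv {t u : Lam} (h : HRed (.lam t) u) :
    ∃ c, u = .lam c ∧ HRed t c := by
  obtain ⟨k, hk⟩ := h
  exact hredN_lam_inv hk rfl

/-- head reduce the function part of an application up to (not through) a λ. -/
theorem hred_to_lam {t w : Lam} (h : HRed t (.lam w)) (a : Lam) :
    ∃ d, HRed (.app t a) (.app (.lam d) a) ∧ HRed d w := by
  obtain ⟨k, hk⟩ := h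
  generalize hl : Lam.lam w = lw at hk
  induction hk with
  | refl => exact ⟨w, hl ▸ HRed.refl _, HRed.refl _⟩
  | step hs hk2 ih =>
    rename_i k t u v
    cases t with
    | var n => cases hs
    | lam d =>
      obtain ⟨c, hc, hdc⟩ := hredN_lam_inv (HRedN.step hs hk2) rfl
      rw [← hl] at hc
      cases hc
      exact ⟨d, HRed.refl _, hdc⟩
    | app x y =>
      obtain ⟨d, h1, h2⟩ := ih hl
      exact ⟨d, HRed.headStep (.app a hs (notlam_app x y)) h1, h2⟩

theorem hred_app_notlam {t p : Lam} (h : HRed t p) (hn : NotLam p) (a : Lam) :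
    HRed (.app t a) (.app p a) := by
  obtain ⟨k, hk⟩ := h
  induction hk with
  | refl => exact HRed.refl _
  | step hs hk2 ih =>
    rename_i k t u v
    cases t with
    | var n => cases hs
    | lam d =>
      obtain ⟨c, hc, _⟩ := hredN_lam_inv (HRedN.step hs hk2) rfl
      exact absurd hc (hn c)
    | app x y =>
      exact HRed.headStep (.app a hs (notlam_app x y)) (ih hn)

/-- `t ≻ λ.c` implies `(t)a ≻ c[a]`. -/
theorem hred_beta_lam {t c : Lam} (h : HRed t (.lam c)) (a : Lam) :
    HRed (.app t a) (c.subst0 a) := by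
  obtain ⟨d, h1, h2⟩ := hred_to_lam h a
  exact h1.trans (HRed.headStep (.beta d a) (hred_subst _ h2))

theorem hstep_det {t u v : Lam} (h1 : HStep t u) (h2 : HStep t v) : u = v := by
  induction h1 generalizing v with
  | beta a b =>
    cases h2 with
    | beta => rfl
    | app _ h hn => exact absurd rfl (hn a)
  | lam h ih =>
    cases h2 with
    | lam h2' => rw [ih h2']
  | app b h hn ih =>
    cases h2 with
    | beta a c => exact absurd rfl (hn a)
    | app _ h2' hn2 => rw [ih h2']

theorem headNormal_app_var (i : ℕ) (X : Lam) : HeadNormal (.app (.var i) X) := by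
  intro u h
  cases h with
  | app _ h _ => cases h

/-- If `t ≻ u` and `t ≻ w` with `w` head normal, then `u ≻ w`. -/
theorem hred_compose {t u w : Lam} (h1 : HRed t u) (h2 : HRed t w) (hw : HeadNormal w) :
    HRed u w := by
  obtain ⟨k, hk⟩ := h1
  induction hk with
  | refl => exact h2
  | step hs hk2 ih =>
    rename_i k t' u' v'
    obtain ⟨m, hm⟩ := h2
    cases hm with
    | refl => exact absurd hs (hw _)
    | step hs2 hm2 =>
      rw [hstep_det hs hs2] at *
      exact ih ⟨_, hm2⟩

/-- gluing: reduce the function part, then continue. -/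
theorem hred_appL_glue {t u a w : Lam} (h : HRed t u) (h2 : HRed (.app u a) w)
    (hw : HeadNormal w) : HRed (.app t a) w := by
  obtain ⟨k, hk⟩ := h
  induction hk with
  | refl => exact h2
  | step hs hk2 ih =>
    rename_i k t' u' v'
    cases t' with
    | var n => cases hs
    | lam d =>
      obtain ⟨c, hc, hdc⟩ := hredN_lam_inv (HRedN.step hs hk2) rfl
      subst hc
      have hstep1 : HStep (Lam.app (Lam.lam c) a) (c.subst0 a) := .beta c a
      have h3 : HRed (c.subst0 a) w := by
        obtain ⟨m, hm⟩ := h2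
        cases hm with
        | refl => exact absurd hstep1 (hw _)
        | step hs2 hm2 =>
          rw [hstep_det hstep1 hs2]
          exact ⟨_, hm2⟩
      exact HRed.headStep (.beta d a) (HRed.trans (hred_subst _ hdc) h3)
    | app x y =>
      exact HRed.headStep (.app a hs (notlam_app x y)) (ih h2)
/-! ## Parallel reduction -/

inductive Par : Lam → Lam → Prop
  | var (n) : Par (.var n) (.var n)
  | lam {t t'} : Par t t' → Par (.lam t) (.lam t')
  | app {t t' u u'} : Par t t' → Par u u' → Par (.app t u) (.app t' u')
  | beta {t t' u u'} : Par t t' → Par u u' → Par (.app (.lam t) u) (t'.subst0 u')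

def Pars : Lam → Lam → Prop := Relation.ReflTransGen Par

theorem Par.refl (t : Lam) : Par t t := by
  induction t with
  | var n => exact .var n
  | app s t ihs iht => exact .app ihs iht
  | lam t ih => exact .lam ih

theorem par_lift {t u : Lam} (h : Par t u) : ∀ c, Par (t.lift c) (u.lift c) := by
  induction h with
  | var n => intro c; simp only [Lam.lift]; split <;> exact Par.refl _
  | lam h ih => intro c; exact .lam (ih (c+1))
  | app h1 h2 ih1 ih2 => intro c; exact .app (ih1 c) (ih2 c)
  | @beta t t' u u' h1 h2 ih1 ih2 =>
    intro c
    have := Par.beta (ih1 (c+1)) (ih2 c)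
    rwa [Lam.subst0_lift] at this

theorem par_subst {t u : Lam} (h : Par t u) {σ σ' : ℕ → Lam}
    (hσ : ∀ n, Par (σ n) (σ' n)) : Par (t.subst σ) (u.subst σ') := by
  induction h generalizing σ σ' with
  | var n => exact hσ n
  | lam h ih =>
    refine Par.lam (ih ?_)
    intro n
    cases n with
    | zero => exact Par.refl _
    | succ n => exact par_lift (hσ n) 0
  | app h1 h2 ih1 ih2 => exact .app (ih1 hσ) (ih2 hσ)
  | @beta t t' u u' h1 h2 ih1 ih2 =>
    have hup : ∀ n, Par (Lam.up σ n) (Lam.up σ' n) := by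
      intro n
      cases n with
      | zero => exact Par.refl _
      | succ n => exact par_lift (hσ n) 0
    have := Par.beta (ih1 hup) (ih2 hσ)
    rw [Lam.subst0_subst] at this
    exact this

theorem par_subst0 {t u a b : Lam} (h : Par t u) (h2 : Par a b) :
    Par (t.subst0 a) (u.subst0 b) := by
  apply par_subst h
  intro n
  cases n with
  | zero => exact h2
  | succ n => exact Par.refl _

namespace Pars

theorem refl (t : Lam) : Pars t t := Relation.ReflTransGen.refl

theorem single {t u : Lam} (h : Par t u) : Pars t u := Relation.ReflTransGen.single h

theorem trans {t u v : Lam} (h1 : Pars t u) (h2 : Pars u v) : Pars t v :=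
  Relation.ReflTransGen.trans h1 h2

theorem lam {t u : Lam} (h : Pars t u) : Pars (.lam t) (.lam u) := by
  induction h with
  | refl => exact refl _
  | tail _ h2 ih => exact ih.tail (Par.lam h2)

theorem app {t t' u u' : Lam} (h1 : Pars t t') (h2 : Pars u u') :
    Pars (.app t u) (.app t' u') := by
  induction h1 with
  | refl =>
    induction h2 with
    | refl => exact refl _
    | tail _ h ih => exact ih.tail (Par.app (Par.refl _) h)
  | tail _ h ih => exact ih.tail (Par.app h (Par.refl _))

end Pars

theorem pars_subst {t u : Lam} (h : Pars t u) {σ σ' : ℕ → Lam}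
    (hσ : ∀ n, Par (σ n) (σ' n)) : Pars (t.subst σ) (u.subst σ') := by
  induction h with
  | refl => exact Pars.single (par_subst (Par.refl _) hσ)
  | tail _ h ih => exact ih.tail (par_subst h (fun n => Par.refl _))

theorem pars_subst0 {t u a b : Lam} (h : Pars t u) (h2 : Pars a b) :
    Pars (t.subst0 a) (u.subst0 b) := by
  have h1 : Pars (t.subst0 a) (u.subst0 a) := by
    induction h with
    | refl => exact Pars.refl _
    | tail _ hp ih => exact ih.tail (par_subst0 hp (Par.refl _))
  refine h1.trans ?_
  induction h2 with
  | refl => exact Pars.refl _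
  | tail _ hp ih => exact ih.trans (Pars.single (par_subst0 (Par.refl u) hp))

theorem beta_par {t u : Lam} (h : Beta t u) : Par t u := by
  induction h with
  | beta t u => exact Par.beta (Par.refl t) (Par.refl u)
  | appL t h ih => exact Par.app ih (Par.refl t)
  | appR s h ih => exact Par.app (Par.refl s) ih
  | lam h ih => exact Par.lam ih

theorem hstep_par {t u : Lam} (h : HStep t u) : Par t u := by
  induction h with
  | beta t u => exact Par.beta (Par.refl t) (Par.refl u)
  | lam h ih => exact Par.lam ih
  | app b h hn ih => exact Par.app ih (Par.refl b)

theorem hred_pars {t u : Lam} (h : HRed t u) : Pars t u := by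
  obtain ⟨k, hk⟩ := h
  induction hk with
  | refl => exact Pars.refl _
  | step h _ ih => exact (Pars.single (hstep_par h)).trans ih

/-! ## Confluence via complete developments -/

def cd : Lam → Lam
  | .var n => .var n
  | .lam t => .lam (cd t)
  | .app (.lam t) u => (cd t).subst0 (cd u)
  | .app (.var n) u => .app (.var n) (cd u)
  | .app (.app a b) u => .app (cd (.app a b)) (cd u)

theorem par_lam_inv {t u : Lam} (h : Par (.lam t) u) : ∃ t', u = .lam t' ∧ Par t t' := by
  cases h with
  | lam h => exact ⟨_, rfl, h⟩

theorem par_triangle {t u : Lam} (h : Par t u) : Par u (cd t) := by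
  induction h with
  | var n => exact Par.refl _
  | lam h ih => exact Par.lam ih
  | @app t t' u u' h1 h2 ih1 ih2 =>
    cases t with
    | var n =>
      cases h1
      exact Par.app (Par.refl _) ih2
    | app a b => exact Par.app ih1 ih2
    | lam a =>
      obtain ⟨a', rfl, ha⟩ := par_lam_inv h1
      obtain ⟨c', hc, hac⟩ := par_lam_inv ih1
      simp only [cd]
      cases hc
      exact Par.beta hac ih2
  | @beta t t' u u' h1 h2 ih1 ih2 =>
    simp only [cd]
    exact par_subst0 ih1 ih2

theorem par_diamond {t u v : Lam} (h1 : Par t u) (h2 : Par t v) :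
    ∃ w, Par u w ∧ Par v w := ⟨cd t, par_triangle h1, par_triangle h2⟩

theorem pars_strip {t u v : Lam} (h1 : Par t u) (h2 : Pars t v) :
    ∃ w, Pars u w ∧ Par v w := by
  induction h2 generalizing u with
  | refl => exact ⟨u, Pars.refl u, h1⟩
  | @tail b c hb hc ih =>
    obtain ⟨w, hw1, hw2⟩ := ih h1
    obtain ⟨w', hw1', hw2'⟩ := par_diamond hc hw2
    exact ⟨w', hw1.trans (Pars.single hw2'), hw1'⟩

theorem pars_confluent {t u v : Lam} (h1 : Pars t u) (h2 : Pars t v) :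
    ∃ w, Pars u w ∧ Pars v w := by
  induction h1 with
  | refl => exact ⟨v, h2, Pars.refl v⟩
  | @tail b c hb hc ih =>
    obtain ⟨w, hw1, hw2⟩ := ih
    obtain ⟨w', hw1', hw2'⟩ := pars_strip hc hw1
    exact ⟨w', hw1', hw2.trans (Pars.single hw2')⟩

theorem betaEq_joins {t u : Lam} (h : BetaEq t u) : ∃ w, Pars t w ∧ Pars u w := by
  induction h with
  | rel a b hab => exact ⟨b, Pars.single (beta_par hab), Pars.refl b⟩
  | refl a => exact ⟨a, Pars.refl a, Pars.refl a⟩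
  | symm a b _ ih => obtain ⟨w, h1, h2⟩ := ih; exact ⟨w, h2, h1⟩
  | trans a b c _ _ ih1 ih2 =>
    obtain ⟨w1, h1, h2⟩ := ih1
    obtain ⟨w2, h3, h4⟩ := ih2
    obtain ⟨w, hw1, hw2⟩ := pars_confluent h2 h3
    exact ⟨w, h1.trans hw1, h4.trans hw2⟩

/-! ## Church numerals are normal -/

theorem par_churchBody_eq {n : ℕ} {v : Lam} (h : Par (churchBody n) v) : v = churchBody n := by
  induction n generalizing v with
  | zero => cases h; rfl
  | succ n ih =>
    cases h with
    | app h1 h2 =>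
      cases h1
      rw [ih h2]
      rfl

theorem par_church_eq {n : ℕ} {v : Lam} (h : Par (church n) v) : v = church n := by
  cases h with
  | lam h =>
    cases h with
    | lam h => rw [par_churchBody_eq h]; rfl

theorem pars_church_eq {n : ℕ} {v : Lam} (h : Pars (church n) v) : v = church n := by
  induction h with
  | refl => rfl
  | tail _ h ih => rw [ih] at h; exact par_church_eq h

theorem betaEq_church_pars {θ : Lam} {n : ℕ} (h : BetaEq θ (church n)) :
    Pars θ (church n) := by
  obtain ⟨w, h1, h2⟩ := betaEq_joins h
  rwa [pars_church_eq h2] at h1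
/-! ## Head factorization machinery -/

theorem hstep_lift {t u : Lam} (h : HStep t u) : ∀ c, HStep (t.lift c) (u.lift c) := by
  induction h with
  | beta a b =>
    intro c
    have : (a.subst0 b).lift c = (a.lift (c+1)).subst0 (b.lift c) := (Lam.subst0_lift a b c).symm
    rw [this]
    exact .beta _ _
  | lam h ih => intro c; exact .lam (ih (c+1))
  | @app tt tt' b h hn ih =>
    intro c
    refine .app _ (ih c) ?_
    intro s hs
    cases tt with
    | var n => cases h
    | lam x => exact hn x rfl
    | app x y => simp [Lam.lift] at hs

theorem hred_lift {t u : Lam} (h : HRed t u) (c : ℕ) : HRed (t.lift c) (u.lift c) := by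
  obtain ⟨k, hk⟩ := h
  induction hk with
  | refl => exact HRed.refl _
  | step h _ ih => exact HRed.headStep (hstep_lift h c) ih

inductive Tag | ne | rx | int | fc

inductive Fam : Tag → Lam → Lam → Prop
  | nvar (n) : Fam .ne (.var n) (.var n)
  | napp {t t' u u'} : Fam .ne t t' → Fam .fc u u' → Fam .ne (.app t u) (.app t' u')
  | rbeta {b b' a a'} : Fam .fc b b' → Fam .fc a a' → Fam .rx (.app (.lam b) a) (.app (.lam b') a')
  | rapp {t t' u u'} : Fam .rx t t' → Fam .fc u u' → Fam .rx (.app t u) (.app t' u')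
  | ilam {t t'} : Fam .int t t' → Fam .int (.lam t) (.lam t')
  | ine {t t'} : Fam .ne t t' → Fam .int t t'
  | irx {t t'} : Fam .rx t t' → Fam .int t t'
  | fc {t p u} : HRed t p → Fam .int p u → Fam .fc t u

theorem fam_pars {tg : Tag} {t u : Lam} (h : Fam tg t u) : Pars t u := by
  induction h with
  | nvar n => exact Pars.refl _
  | napp _ _ ih1 ih2 => exact Pars.app ih1 ih2
  | rbeta _ _ ih1 ih2 => exact Pars.app (Pars.lam ih1) ih2
  | rapp _ _ ih1 ih2 => exact Pars.app ih1 ih2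
  | ilam _ ih => exact Pars.lam ih
  | ine _ ih => exact ih
  | irx _ ih => exact ih
  | fc h _ ih => exact (hred_pars h).trans ih

theorem fc_hred {t t' u : Lam} (h : HRed t t') (h2 : Fam .fc t' u) : Fam .fc t u := by
  cases h2 with
  | fc h1 h2 => exact .fc (h.trans h1) h2

theorem fc_of_int {t u : Lam} (h : Fam .int t u) : Fam .fc t u := .fc (HRed.refl t) h

theorem ne_src_notlam {t u : Lam} (h : Fam .ne t u) : NotLam t := by
  cases h with
  | nvar n => exact notlam_var n
  | napp _ _ => exact notlam_app _ _

theorem rx_src_app {t u : Lam} (h : Fam .rx t u) : ∃ a b, t = .app a b := by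
  cases h with
  | rbeta _ _ => exact ⟨_, _, rfl⟩
  | rapp _ _ => exact ⟨_, _, rfl⟩

theorem rx_tgt_app {t u : Lam} (h : Fam .rx t u) : ∃ a b, u = .app a b := by
  cases h with
  | rbeta _ _ => exact ⟨_, _, rfl⟩
  | rapp _ _ => exact ⟨_, _, rfl⟩

theorem ne_no_hstep : ∀ {u t u' : Lam}, Fam .ne t u → HStep u u' → False := by
  intro u
  induction u with
  | var n => intro t u' h hs; cases hs
  | lam x ih => intro t u' h hs; cases h
  | app x y ihx ihy =>
    intro t u' h hs
    cases h with
    | napp h1 h2 =>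
      cases hs with
      | beta a b =>
        cases h1
      | app _ hs' hn => exact ihx h1 hs'

theorem ne_rx_false : ∀ {b : Lam} {a c : Lam}, Fam .ne a b → Fam .rx b c → False := by
  intro b
  induction b with
  | var n => intro a c h1 h2; cases h2
  | lam x ih => intro a c h1 h2; cases h1
  | app x y ihx ihy =>
    intro a c h1 h2
    cases h1 with
    | napp h1' _ =>
      cases h2 with
      | rbeta _ _ => cases h1'
      | rapp h2' _ => exact ihx h1' h2'

theorem fam_lift {tg : Tag} {t u : Lam} (h : Fam tg t u) : ∀ c, Fam tg (t.lift c) (u.lift c) := by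
  induction h with
  | nvar n => intro c; simp only [Lam.lift]; split <;> exact .nvar _
  | napp _ _ ih1 ih2 => intro c; exact .napp (ih1 c) (ih2 c)
  | rbeta _ _ ih1 ih2 => intro c; exact .rbeta (ih1 (c+1)) (ih2 c)
  | rapp _ _ ih1 ih2 => intro c; exact .rapp (ih1 c) (ih2 c)
  | ilam _ ih => intro c; exact .ilam (ih (c+1))
  | ine _ ih => intro c; exact .ine (ih c)
  | irx _ ih => intro c; exact .irx (ih c)
  | fc h _ ih => intro c; exact .fc (hred_lift h c) (ih c)

theorem fc_app {t1 u1 t2 u2 : Lam} (h1 : Fam .fc t1 u1) (h2 : Fam .fc t2 u2) :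
    Fam .fc (.app t1 t2) (.app u1 u2) := by
  obtain ⟨p, hp, hint⟩ : ∃ p, HRed t1 p ∧ Fam .int p u1 := by
    cases h1 with | fc h1' h2' => exact ⟨_, h1', h2'⟩
  cases hint with
  | ilam hd =>
    rename_i d d'
    obtain ⟨e, he1, he2⟩ := hred_to_lam hp t2
    exact .fc he1 (.irx (.rbeta (.fc he2 hd) h2))
  | ine hne =>
    refine .fc (hred_app_notlam hp (ne_src_notlam hne) t2) (.ine (.napp hne h2))
  | irx hrx =>
    obtain ⟨a, b, rfl⟩ := rx_src_app hrx
    refine .fc (hred_app_notlam hp (notlam_app a b) t2) (.irx (.rapp hrx h2))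

theorem fc_lam {t u : Lam} (h : Fam .fc t u) : Fam .fc (.lam t) (.lam u) := by
  cases h with
  | fc h1 h2 => exact .fc (hred_lam h1) (.ilam h2)

theorem fc_var (n : ℕ) : Fam .fc (.var n) (.var n) := .fc (HRed.refl _) (.ine (.nvar n))

theorem fc_refl (t : Lam) : Fam .fc t t := by
  induction t with
  | var n => exact fc_var n
  | app s t ihs iht => exact fc_app ihs iht
  | lam t ih => exact fc_lam ih

/-! ### Substitution lemma for the factorization family -/

def GoodSub (σ σ' : ℕ → Lam) : Prop := ∀ n, Fam .fc (σ n) (σ' n)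

theorem goodSub_up {σ σ' : ℕ → Lam} (h : GoodSub σ σ') : GoodSub (Lam.up σ) (Lam.up σ') := by
  intro n
  cases n with
  | zero => exact fc_var 0
  | succ n => exact fam_lift (h n) 0

theorem fam_sub {tg : Tag} {t u : Lam} (h : Fam tg t u) :
    ∀ σ σ', GoodSub σ σ' →
      (match tg with
       | .rx => Fam .rx (t.subst σ) (u.subst σ')
       | _ => Fam .fc (t.subst σ) (u.subst σ')) := by
  induction h with
  | nvar n => intro σ σ' hσ; exact hσ n
  | napp _ _ ih1 ih2 => intro σ σ' hσ; exact fc_app (ih1 σ σ' hσ) (ih2 σ σ' hσ)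
  | rbeta _ _ ih1 ih2 =>
    intro σ σ' hσ
    exact .rbeta (ih1 _ _ (goodSub_up hσ)) (ih2 σ σ' hσ)
  | rapp _ _ ih1 ih2 =>
    intro σ σ' hσ
    exact .rapp (ih1 σ σ' hσ) (ih2 σ σ' hσ)
  | ilam _ ih => intro σ σ' hσ; exact fc_lam (ih _ _ (goodSub_up hσ))
  | ine _ ih => intro σ σ' hσ; exact ih σ σ' hσ
  | irx _ ih => intro σ σ' hσ; exact .fc (HRed.refl _) (.irx (ih σ σ' hσ))
  | fc h _ ih => intro σ σ' hσ; exact fc_hred (hred_subst σ h) (ih σ σ' hσ)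

theorem goodSub0 {a a' : Lam} (h : Fam .fc a a') :
    GoodSub (fun n => match n with | 0 => a | n + 1 => .var n)
            (fun n => match n with | 0 => a' | n + 1 => .var n) := by
  intro n
  cases n with
  | zero => exact h
  | succ n => exact fc_var n

theorem fc_subst0 {b b' a a' : Lam} (h : Fam .fc b b') (h2 : Fam .fc a a') :
    Fam .fc (b.subst0 a) (b'.subst0 a') :=
  fam_sub h _ _ (goodSub0 h2)

/-! ### Swap: internal then head gives head then factored -/

theorem fam_swap {tg : Tag} {p u : Lam} (h : Fam tg p u) :
    (match tg with
     | .int => ∀ u', HStep u u' → ∃ p', HStep p p' ∧ Fam .fc p' u'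
     | .rx => ∀ u', HStep u u' → ∃ p', HStep p p' ∧ Fam .fc p' u'
     | _ => True) := by
  induction h with
  | nvar n => trivial
  | napp _ _ _ _ => trivial
  | rbeta hb ha _ _ =>
    rename_i b b' a a' _ _
    intro u' hs
    cases hs with
    | beta _ _ => exact ⟨b.subst0 a, .beta b a, fc_subst0 hb ha⟩
    | app _ hs' hn => exact absurd rfl (hn b')
  | @rapp t t' v v' h1 h2 ih1 _ =>
    intro u' hs
    obtain ⟨x, y, hxy⟩ := rx_tgt_app h1
    subst hxy
    cases hs with
    | app _ hs' hn =>
      obtain ⟨p', hp1, hp2⟩ := ih1 _ hs'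
      obtain ⟨a, b, hab⟩ := rx_src_app h1
      subst hab
      exact ⟨.app p' v, .app v hp1 (notlam_app a b), fc_app hp2 h2⟩
  | ilam h ih =>
    intro u' hs
    cases hs with
    | lam hs' =>
      obtain ⟨p', hp1, hp2⟩ := ih _ hs'
      exact ⟨_, .lam hp1, fc_lam hp2⟩
  | ine hne _ =>
    intro u' hs
    exact absurd hs (fun hs => ne_no_hstep hne hs)
  | irx _ ih => exact ih
  | fc _ _ _ => trivial
/-! ### Pushing an internal step over a head reduction -/

theorem int_hredN {k : ℕ} {u v : Lam} (hk : HRedN k u v) :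
    ∀ {p}, Fam .int p u → Fam .fc p v := by
  induction hk with
  | refl => exact fun h => fc_of_int h
  | @step k a b w hs hk2 ih =>
    intro p h
    obtain ⟨p', hp1, hp2⟩ := (fam_swap h) _ hs
    obtain ⟨q, hq1, hq2⟩ : ∃ q, HRed p' q ∧ Fam .int q b := by
      cases hp2 with | fc x y => exact ⟨_, x, y⟩
    obtain ⟨r, hr1, hr2⟩ : ∃ r, HRed q r ∧ Fam .int r w := by
      cases ih hq2 with | fc x y => exact ⟨_, x, y⟩
    exact .fc ((HRed.headStep hp1 hq1).trans hr1) hr2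

/-! ### Factorization of a parallel step -/

theorem par_fc {t u : Lam} (h : Par t u) : Fam .fc t u := by
  induction h with
  | var n => exact fc_var n
  | lam _ ih => exact fc_lam ih
  | app _ _ ih1 ih2 => exact fc_app ih1 ih2
  | @beta a a' b b' _ _ ih1 ih2 =>
    exact fc_hred (HRed.single (.beta a b)) (fc_subst0 ih1 ih2)

theorem par_hredN_fc {t u v : Lam} {k : ℕ} (h : Par t u) (hk : HRedN k u v) :
    Fam .fc t v := by
  obtain ⟨p, hp1, hp2⟩ : ∃ p, HRed t p ∧ Fam .int p u := by
    cases par_fc h with | fc a b => exact ⟨_, a, b⟩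
  exact fc_hred hp1 (int_hredN hk hp2)

/-! ### Composition of internal reductions -/

theorem fam_comp {tg : Tag} {b c : Lam} (h : Fam tg b c) :
    (match tg with
     | .ne => (∀ a, Fam .ne a b → Fam .ne a c) ∧ (∀ a, Fam .rx a b → Fam .rx a c)
     | .rx => ∀ a, Fam .rx a b → Fam .rx a c
     | .int => ∀ a, Fam .int a b → Fam .int a c
     | .fc => ∀ a, Fam .fc a b → Fam .fc a c) := by
  induction h with
  | nvar n =>
    constructor
    · exact fun a h => h
    · intro a h
      obtain ⟨x, y, hx⟩ := rx_tgt_app h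
      cases hx
  | @napp b1 c1 b2 c2 h1 h2 ih1 ih2 =>
    constructor
    · intro a h
      cases h with
      | napp ha1 ha2 => exact .napp (ih1.1 _ ha1) (ih2 _ ha2)
    · intro a h
      cases h with
      | rbeta ha1 ha2 => cases h1
      | rapp ha1 ha2 => exact .rapp (ih1.2 _ ha1) (ih2 _ ha2)
  | @rbeta bb cb ba ca h1 h2 ih1 ih2 =>
    intro a h
    cases h with
    | rbeta ha1 ha2 => exact .rbeta (ih1 _ ha1) (ih2 _ ha2)
    | rapp ha1 ha2 =>
      obtain ⟨x, y, hx⟩ := rx_tgt_app ha1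
      cases hx
  | @rapp b1 c1 b2 c2 h1 h2 ih1 ih2 =>
    intro a h
    cases h with
    | rbeta ha1 ha2 =>
      obtain ⟨x, y, hx⟩ := rx_src_app h1
      cases hx
    | rapp ha1 ha2 => exact .rapp (ih1 _ ha1) (ih2 _ ha2)
  | @ilam b0 c0 h ih =>
    intro a h2
    cases h2 with
    | ilam ha => exact .ilam (ih _ ha)
    | ine ha => cases ha
    | irx ha => obtain ⟨x, y, hx⟩ := rx_tgt_app ha; cases hx
  | @ine b' c' h ih =>
    intro a h2
    cases h2 with
    | ilam ha => cases h
    | ine ha => exact .ine (ih.1 _ ha)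
    | irx ha => exact .irx (ih.2 _ ha)
  | @irx b' c' h ih =>
    intro a h2
    cases h2 with
    | ilam ha => obtain ⟨x, y, hx⟩ := rx_src_app h; cases hx
    | ine ha => exact absurd h (fun h => ne_rx_false ha h)
    | irx ha => exact .irx (ih _ ha)
  | @fc b' p c' hbp hpc ih =>
    intro a h2
    obtain ⟨q, hq1, hq2⟩ : ∃ q, HRed a q ∧ Fam .int q b' := by
      cases h2 with | fc x y => exact ⟨_, x, y⟩
    obtain ⟨k, hk⟩ := hbp
    obtain ⟨s, hs1, hs2⟩ : ∃ s, HRed q s ∧ Fam .int s p := by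
      cases int_hredN hk hq2 with | fc x y => exact ⟨_, x, y⟩
    exact .fc (hq1.trans hs1) (ih _ hs2)

theorem int_comp {a b c : Lam} (h1 : Fam .int a b) (h2 : Fam .int b c) : Fam .int a c :=
  (fam_comp h2) a h1

/-! ### Factorization of parallel reduction sequences -/

theorem pars_fc {t u : Lam} (h : Pars t u) : Fam .fc t u := by
  induction h using Relation.ReflTransGen.head_induction_on with
  | refl => exact fc_refl u
  | @head t t1 hpar hrest ih =>
    obtain ⟨p, hp1, hp2⟩ : ∃ p, HRed t1 p ∧ Fam .int p u := by
      cases ih with | fc a b => exact ⟨_, a, b⟩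
    obtain ⟨k, hk⟩ := hp1
    obtain ⟨q, hq1, hq2⟩ : ∃ q, HRed t q ∧ Fam .int q p := by
      cases par_hredN_fc hpar hk with | fc a b => exact ⟨_, a, b⟩
    exact .fc hq1 (int_comp hq2 hp2)

/-! ### The three head normal form tools -/

theorem tool_lam {t c : Lam} (h : Pars t (.lam c)) :
    ∃ d, HRed t (.lam d) ∧ Pars d c := by
  obtain ⟨p, hp1, hp2⟩ : ∃ p, HRed t p ∧ Fam .int p (.lam c) := by
    cases pars_fc h with | fc a b => exact ⟨_, a, b⟩
  cases hp2 with
  | ilam hd => exact ⟨_, hp1, fam_pars hd⟩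
  | ine hne => cases hne
  | irx hrx => obtain ⟨x, y, hx⟩ := rx_tgt_app hrx; cases hx

theorem tool_var {t : Lam} {i : ℕ} (h : Pars t (.var i)) : HRed t (.var i) := by
  obtain ⟨p, hp1, hp2⟩ : ∃ p, HRed t p ∧ Fam .int p (.var i) := by
    cases pars_fc h with | fc a b => exact ⟨_, a, b⟩
  cases hp2 with
  | ine hne => cases hne; exact hp1
  | irx hrx => obtain ⟨x, y, hx⟩ := rx_tgt_app hrx; cases hx

theorem tool_appvar {t a : Lam} {i : ℕ} (h : Pars t (.app (.var i) a)) :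
    ∃ b, HRed t (.app (.var i) b) ∧ Pars b a := by
  obtain ⟨p, hp1, hp2⟩ : ∃ p, HRed t p ∧ Fam .int p (.app (.var i) a) := by
    cases pars_fc h with | fc a b => exact ⟨_, a, b⟩
  cases hp2 with
  | ine hne =>
    cases hne with
    | napp h1 h2 =>
      cases h1
      exact ⟨_, hp1, fam_pars h2⟩
  | irx hrx =>
    cases hrx with
    | rapp h1 h2 => obtain ⟨x, y, hx⟩ := rx_tgt_app h1; cases hx
/-! ## The storage computation -/

def Betas : Lam → Lam → Prop := Relation.ReflTransGen Beta

namespace Betas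

theorem refl (t : Lam) : Betas t t := Relation.ReflTransGen.refl

theorem trans {t u v : Lam} (h1 : Betas t u) (h2 : Betas u v) : Betas t v :=
  Relation.ReflTransGen.trans h1 h2

theorem lam {t u : Lam} (h : Betas t u) : Betas (.lam t) (.lam u) := by
  induction h with
  | refl => exact refl _
  | tail _ h ih => exact ih.tail (.lam h)

theorem appR {t u u' : Lam} (h : Betas u u') : Betas (.app t u) (.app t u') := by
  induction h with
  | refl => exact refl _
  | tail _ h ih => exact ih.tail (.appR t h)

end Betas

theorem betas_betaEq {t u : Lam} (h : Betas t u) : BetaEq t u := by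
  induction h with
  | refl => exact .refl t
  | tail _ h ih => exact .trans _ _ _ ih (.rel _ _ h)

theorem bnd_churchBody (k : ℕ) : Lam.bnd 2 (churchBody k) = true := by
  induction k with
  | zero => decide
  | succ k ih => simp [churchBody, Lam.bnd, ih]

theorem bnd_church (k : ℕ) : Lam.bnd 0 (church k) = true := by
  simp [church, Lam.bnd, bnd_churchBody]

theorem churchBody_subst {σ : ℕ → Lam} (h0 : σ 0 = .var 0) (h1 : σ 1 = .var 1) (k : ℕ) :
    (churchBody k).subst σ = churchBody k := by
  induction k with
  | zero => simpa [churchBody, Lam.subst]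
  | succ k ih => simp [churchBody, Lam.subst, ih, h0]

theorem succ_church (k : ℕ) : Betas (.app csucc (church k)) (church (k+1)) := by
  have e1 : (Lam.lam (.lam (.app (.var 0) (.app (.app (.var 2) (.var 1)) (.var 0))))).subst0
      (church k)
      = .lam (.lam (.app (.var 0) (.app (.app (church k) (.var 1)) (.var 0)))) := by
    simp only [Lam.subst0, Lam.subst, Lam.up, Lam.lift, Lam.lift_closed (bnd_church k)]
    simp [church, Lam.lift_bnd _ 2 2 (bnd_churchBody k) (le_refl 2)]
  have s1 : Beta (.app csucc (church k))
      (.lam (.lam (.app (.var 0) (.app (.app (church k) (.var 1)) (.var 0))))) := by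
    have := Beta.beta (Lam.lam (.lam (.app (.var 0) (.app (.app (.var 2) (.var 1)) (.var 0)))))
      (church k)
    rwa [e1] at this
  refine Relation.ReflTransGen.head s1 (Betas.lam (Betas.lam (Betas.appR ?_)))
  -- inner: (church k) (var 1) (var 0) ⟶* churchBody k
  have s2 : Beta (.app (church k) (.var 1))
      (.lam ((churchBody k).subst (Lam.up (fun n => match n with | 0 => .var 1 | n+1 => .var n)))) :=
    Beta.beta _ _
  have s3 : Beta (.app (.lam ((churchBody k).subst
        (Lam.up (fun n => match n with | 0 => .var 1 | n+1 => .var n)))) (.var 0))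
      (churchBody k) := by
    have := Beta.beta ((churchBody k).subst
        (Lam.up (fun n => match n with | 0 => .var 1 | n+1 => .var n))) (.var 0)
    have e : (((churchBody k).subst
        (Lam.up (fun n => match n with | 0 => .var 1 | n+1 => .var n)))).subst0 (.var 0)
        = churchBody k := by
      unfold Lam.subst0
      rw [Lam.subst_subst]
      exact churchBody_subst (by rfl) (by rfl) k
    rwa [e] at this
  exact Relation.ReflTransGen.head (Beta.appL (.var 0) s2)
    (Relation.ReflTransGen.single s3)

theorem succIter_church (n : ℕ) : Betas (succIter n) (church n) := by
  induction n with
  | zero => exact Betas.refl _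
  | succ n ih => exact (Betas.appR ih).trans (succ_church n)
/-! ## The main invariant computation -/

/-- `sIter j X = (s̲)ʲ X` (built inside-out). -/
def sIter : ℕ → Lam → Lam
  | 0, X => X
  | j+1, X => sIter j (.app csucc X)

theorem sIter_succIter (j : ℕ) : ∀ i, sIter j (succIter i) = succIter (j + i) := by
  induction j with
  | zero => intro i; simp [sIter]
  | succ j ih =>
    intro i
    have : (Lam.app csucc (succIter i)) = succIter (i+1) := rfl
    rw [sIter, this, ih (i+1)]
    congr 1
    omega

/-- The continuation-building combinator: body of `F`. -/
def Kc : Lam := .lam (.app (.var 1) (.app csucc (.var 0)))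

/-- `C` is a continuation that delivers `(f)(s̲)ʲ X` when fed `X`. -/
def ContOK (C : Lam) (j : ℕ) : Prop :=
  ∀ X, HRed (.app C X) (.app (.var 0) (sIter j X))

theorem contOK_var0 : ContOK (.var 0) 0 := fun _ => HRed.refl _

theorem Kc_subst0 (C : Lam) : Kc.subst0 C = .lam (.app (C.lift 0) (.app csucc (.var 0))) := rfl

theorem contOK_step {C : Lam} {j : ℕ} (h : ContOK C j) : ContOK (Kc.subst0 C) (j+1) := by
  intro X
  rw [Kc_subst0]
  have e : (Lam.app (C.lift 0) (.app csucc (.var 0))).subst0 X = .app C (.app csucc X) := by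
    show Lam.app ((C.lift 0).subst0 X) (.app csucc X) = .app C (.app csucc X)
    rw [Lam.lift0_subst0]
  have s1 : HStep (.app (.lam (.app (C.lift 0) (.app csucc (.var 0)))) X)
      (.app C (.app csucc X)) := by
    have := HStep.beta (Lam.app (C.lift 0) (.app csucc (.var 0))) X
    rwa [e] at this
  exact HRed.headStep s1 (h (.app csucc X))

/-- The substitution of `x := δ`, `f' := G` arising from the computation. -/
def sigma2 : ℕ → Lam := fun n => match n with
  | 0 => Gop
  | 1 => deltaOp
  | n+2 => .var n

theorem Gop_beta (A : Lam) :
    HStep (.app Gop A) (.lam (.app (A.lift 0) Kc)) := by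
  have h := HStep.beta (Lam.lam (.app (.var 1) Kc)) A
  have e : (Lam.lam (.app (.var 1) Kc)).subst0 A = .lam (.app (A.lift 0) Kc) := rfl
  rw [e] at h
  exact h

theorem main_invariant : ∀ (m : ℕ) (u C : Lam) (j : ℕ),
    Pars u (churchBody m) → ContOK C j →
    HRed (.app (u.subst sigma2) C) (.app (.var 0) (succIter (m + j))) := by
  intro m
  induction m with
  | zero =>
    intro u C j hu hC
    have h1 : HRed u (.var 1) := tool_var hu
    have h2 : HRed (u.subst sigma2) deltaOp := hred_subst sigma2 h1
    have h3 : HRed (.app (u.subst sigma2) C) ((Lam.app (.var 0) czero).subst0 C) :=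
      hred_beta_lam h2 C
    have e : (Lam.app (.var 0) czero).subst0 C = .app C czero := rfl
    rw [e] at h3
    have h4 := hC czero
    have e2 : sIter j czero = succIter (0 + j) := by
      have : czero = succIter 0 := rfl
      rw [this, sIter_succIter j 0]
      congr 1
      omega
    rw [e2] at h4
    exact h3.trans h4
  | succ m ih =>
    intro u C j hu hC
    obtain ⟨u', hu1, hu2⟩ := tool_appvar hu
    have h2 : HRed (u.subst sigma2) (.app Gop (u'.subst sigma2)) := hred_subst sigma2 hu1
    set A := u'.subst sigma2 with hA
    have h3 : HRed (.app (u.subst sigma2) C) (.app (.app Gop A) C) :=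
      hred_app_notlam h2 (notlam_app _ _) C
    have s4 : HStep (.app (.app Gop A) C) (.app (.lam (.app (A.lift 0) Kc)) C) :=
      .app C (Gop_beta A) (notlam_app _ _)
    have e5 : (Lam.app (A.lift 0) Kc).subst0 C = .app A (Kc.subst0 C) := by
      show Lam.app ((A.lift 0).subst0 C) (Kc.subst0 C) = .app A (Kc.subst0 C)
      rw [Lam.lift0_subst0]
    have s5 : HStep (.app (.lam (.app (A.lift 0) Kc)) C) (.app A (Kc.subst0 C)) := by
      have := HStep.beta (Lam.app (A.lift 0) Kc) C
      rwa [e5] at this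
    have h6 : HRed (.app A (Kc.subst0 C)) (.app (.var 0) (succIter (m + (j+1)))) :=
      ih u' (Kc.subst0 C) (j+1) hu2 (contOK_step hC)
    have e7 : m + (j + 1) = (m + 1) + j := by omega
    rw [e7] at h6
    exact h3.trans (HRed.headStep s4 (HRed.headStep s5 h6))

theorem T1_beta (θ : Lam) :
    HStep (.app (.app T1 θ) (.var 0)) (.app (.app (.app θ deltaOp) Gop) (.var 0)) := by
  have h := HStep.beta (Lam.app (.app (.var 0) deltaOp) Gop) θ
  have e : (Lam.app (.app (.var 0) deltaOp) Gop).subst0 θ = .app (.app θ deltaOp) Gop := rfl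
  rw [e] at h
  exact .app (.var 0) h (notlam_app _ _)

theorem sigma2_eq (u : Lam) :
    (u.subst (Lam.up (fun n => match n with | 0 => deltaOp | n+1 => .var n))).subst0 Gop
      = u.subst sigma2 := by
  unfold Lam.subst0
  rw [Lam.subst_subst]
  apply Lam.subst_ext
  intro n
  match n with
  | 0 => rfl
  | 1 =>
    show ((deltaOp.lift 0).subst _) = deltaOp
    rw [Lam.lift_closed Lam.bnd_delta, Lam.subst_closed Lam.bnd_delta]
  | (n+2) =>
    simp [Lam.up, Lam.lift, Lam.subst, sigma2]

/-- `T₁ = λn((n)δ)G` is a storage operator for the integers. -/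
theorem T1_is_storage : IsStorage T1 := by
  intro n
  refine ⟨succIter n, betas_betaEq (succIter_church n), ?_⟩
  intro θ hθ
  refine ⟨Lam.var, ?_⟩
  rw [Lam.subst_id]
  have h1 : Pars θ (church n) := betaEq_church_pars hθ
  obtain ⟨u₁, hθ1, hu1⟩ := tool_lam h1
  obtain ⟨u₂, hu1', hu2⟩ := tool_lam hu1
  -- head reduction of (θ)δ
  have h2 : HRed (.app θ deltaOp) (u₁.subst0 deltaOp) := hred_beta_lam hθ1 deltaOp
  have h3 : HRed (u₁.subst0 deltaOp)
      (.lam (u₂.subst (Lam.up (fun n => match n with | 0 => deltaOp | n+1 => .var n)))) :=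
    hred_subst _ hu1'
  have h4 : HRed (.app (.app θ deltaOp) Gop)
      ((u₂.subst (Lam.up (fun n => match n with | 0 => deltaOp | n+1 => .var n))).subst0 Gop) :=
    hred_beta_lam (h2.trans h3) Gop
  rw [sigma2_eq] at h4
  have h5 : HRed (.app (u₂.subst sigma2) (.var 0)) (.app (.var 0) (succIter (n + 0))) :=
    main_invariant n u₂ (.var 0) 0 hu2 contOK_var0
  rw [Nat.add_zero] at h5
  have h6 : HRed (.app (.app (.app θ deltaOp) Gop) (.var 0)) (.app (.var 0) (succIter n)) :=
    hred_appL_glue h4 h5 (headNormal_app_var 0 _)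
  exact HRed.headStep (T1_beta θ) h6
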